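/- Let L generate an analytic semigroup with ‖e^{tL}‖ ≤ M e^{-μt} (M ≥ 1, μ > 0) on a Hilbert space X. Then for any α ∈ (0,1), ε > 0, and any f ∈ C^α([0,T];X) with f(0) = 0, the convolution t ↦ ∫₀ᵗ e^{(t-s)L/ε²} f(s) ds satisfies ‖t ↦ ∫₀ᵗ e^{(t-s)L/ε²} f(s) ds‖_{C^α([0,T];X)} ≤ C ε² ‖f‖_{C^α([0,T];X)} for a constant C independent of ε and f. -/

import Mathlib

open MeasureTheory Set

/-- The `C⁰` (sup) norm of `g` on `[0,T]`. -/
noncomputable def supNorm {X : Type*} [NormedAddCommGroup X] (T : ℝ) (g : ℝ → X) : ℝ :=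
  ⨆ t : Icc (0:ℝ) T, ‖g (t : ℝ)‖

/-- The `α`-Hölder seminorm of `g` on `[0,T]`. -/
noncomputable def holderSemi {X : Type*} [NormedAddCommGroup X] (α T : ℝ) (g : ℝ → X) : ℝ :=
  ⨆ p : Icc (0:ℝ) T × Icc (0:ℝ) T,
    if (p.1 : ℝ) = (p.2 : ℝ) then 0
    else ‖g (p.1 : ℝ) - g (p.2 : ℝ)‖ / |(p.1 : ℝ) - (p.2 : ℝ)| ^ α

/-- The `α`-Hölder norm of `g` on `[0,T]`: sup norm plus Hölder seminorm. -/
noncomputable def holderNorm {X : Type*} [NormedAddCommGroup X] (α T : ℝ) (g : ℝ → X) : ℝ :=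
  supNorm T g + holderSemi α T g

/-! After the substitution `w = t - s` the convolution is `∫₀ᵗ K w (f (t - w)) dw` with
`‖K w‖ ≤ M e^{-μ w / ε²}`, whose integral over `[0, ∞)` is `M ε² / μ`. Since `f 0 = 0`,
`‖f s‖ ≤ [f]_α T^α`, which gives the sup bound. For `u < v` the increment splits as
`∫₀ᵘ K w (f (v - w) - f (u - w)) dw + ∫ᵤᵛ K w (f (v - w)) dw`, and both integrands are at most
`[f]_α (v - u)^α` times the kernel bound.

No measurability of the semigroup is assumed, so the Bochner integral may take the junk value `0`
at some times `t`. Between two such times nothing needs proving, and a pair consisting of one of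
them and a regular time is handled through the continuity of the convolution, which may be assumed
because the Hölder seminorm is `0` when it is infinite. -/

open Filter Topology

lemma integral_exp_neg_mul_le {k a b : ℝ} (hk : 0 < k) (ha : 0 ≤ a) :
    ∫ w in a..b, Real.exp (-k * w) ≤ 1 / k := by
  rw [intervalIntegral.integral_comp_mul_left (fun w => Real.exp w) (neg_ne_zero.2 hk.ne'),
    integral_exp, smul_eq_mul, inv_neg, neg_mul, ← mul_neg, neg_sub, ← div_eq_inv_mul]
  have hea : Real.exp (-k * a) ≤ 1 := Real.exp_le_one_iff.2 (by nlinarith)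
  have heb : 0 < Real.exp (-k * b) := Real.exp_pos _
  gcongr
  linarith

lemma norm_integral_le_of_norm_le_mul_exp {E : Type*} [NormedAddCommGroup E] [NormedSpace ℝ E]
    {φ : ℝ → E} {c k a b : ℝ} (hc : 0 ≤ c) (hk : 0 < k) (ha : 0 ≤ a) (hab : a ≤ b)
    (hφ : ∀ w ∈ Icc a b, ‖φ w‖ ≤ c * Real.exp (-k * w)) :
    ‖∫ w in a..b, φ w‖ ≤ c / k :=
  calc ‖∫ w in a..b, φ w‖ ≤ ∫ w in a..b, c * Real.exp (-k * w) :=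
        intervalIntegral.norm_integral_le_of_norm_le hab
          (ae_of_all _ fun w hw => hφ w (Ioc_subset_Icc_self hw))
          ((by fun_prop : Continuous fun w => c * Real.exp (-k * w)).intervalIntegrable _ _)
    _ = c * ∫ w in a..b, Real.exp (-k * w) := intervalIntegral.integral_const_mul _ _
    _ ≤ c * (1 / k) := mul_le_mul_of_nonneg_left (integral_exp_neg_mul_le hk ha) hc
    _ = c / k := mul_one_div _ _

section Holder

variable {X : Type*} [NormedAddCommGroup X] {B α T : ℝ} {g : ℝ → X} {s : Set ℝ}

def RealHolderOn (B α : ℝ) (g : ℝ → X) (s : Set ℝ) : Prop :=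
  ∀ x ∈ s, ∀ y ∈ s, ‖g x - g y‖ ≤ B * |x - y| ^ α

lemma RealHolderOn.mono {t : Set ℝ} (hg : RealHolderOn B α g s) (hts : t ⊆ s) :
    RealHolderOn B α g t :=
  fun x hx y hy => hg x (hts hx) y (hts hy)

lemma RealHolderOn.norm_le_of_apply_zero (hg : RealHolderOn B α g (Icc 0 T)) (hg0 : g 0 = 0) :
    ∀ t ∈ Icc 0 T, ‖g t‖ ≤ B * t ^ α := fun t ht => by
  simpa [hg0, abs_of_nonneg ht.1] using hg t ht 0 ⟨le_rfl, ht.1.trans ht.2⟩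

lemma RealHolderOn.continuousOn (hg : RealHolderOn B α g s) (hα : 0 < α) :
    ContinuousOn g s := by
  intro x hx
  rw [ContinuousWithinAt, tendsto_iff_norm_sub_tendsto_zero]
  have hcont : Continuous fun y => B * |y - x| ^ α := by
    have := Real.continuous_rpow_const hα.le
    fun_prop
  have hlim : Tendsto (fun y => B * |y - x| ^ α) (𝓝[s] x) (𝓝 0) := by
    simpa [Real.zero_rpow hα.ne'] using (hcont.continuousWithinAt (s := s) (x := x)).tendsto
  exact squeeze_zero' (Eventually.of_forall fun _ => norm_nonneg _)
    (eventually_mem_nhdsWithin.mono fun y hy => hg y hy x hx) hlim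

/-- `g ≠ 0` on `[a, q)` for the first zero `q` of `g` in `[a, b]`, so by continuity the
hypothesis holds at `q`. -/
lemma norm_le_of_eq_zero_right {a b : ℝ} (hab : a ≤ b) (hB : 0 ≤ B) (hα : 0 ≤ α)
    (hg : ContinuousOn g (Icc a b)) (hgb : g b = 0)
    (h : ∀ x ∈ Icc a b, g x ≠ 0 → ‖g a - g x‖ ≤ B * (x - a) ^ α) :
    ‖g a‖ ≤ B * (b - a) ^ α := by
  set Z := Icc a b ∩ g ⁻¹' {0}
  have hZ : IsClosed Z := hg.preimage_isClosed_of_isClosed isClosed_Icc isClosed_singleton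
  have hbZ : b ∈ Z := ⟨right_mem_Icc.2 hab, hgb⟩
  have hZa : BddBelow Z := ⟨a, fun x hx => hx.1.1⟩
  have hqZ : sInf Z ∈ Z := hZ.csInf_mem ⟨b, hbZ⟩ hZa
  set q := sInf Z
  obtain ⟨⟨haq, hqb⟩, hgq : g q = 0⟩ := hqZ
  rcases haq.eq_or_lt with haq | haq
  · rw [← haq] at hgq
    rw [hgq, norm_zero]
    exact mul_nonneg hB (Real.rpow_nonneg (sub_nonneg.2 hab) _)
  have hW : IsClosed {x ∈ Icc a b | ‖g a - g x‖ ≤ B * (x - a) ^ α} :=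
    isClosed_Icc.isClosed_le (continuousOn_const.sub hg).norm
      (continuousOn_const.mul ((Real.continuous_rpow_const hα).comp_continuousOn
        (continuousOn_id.sub continuousOn_const)))
  have hIco : Ico a q ⊆ {x ∈ Icc a b | ‖g a - g x‖ ≤ B * (x - a) ^ α} := fun x hx => by
    have hxab : x ∈ Icc a b := ⟨hx.1, hx.2.le.trans hqb⟩
    have hgx : g x ≠ 0 := fun hgx => (csInf_le hZa ⟨hxab, hgx⟩).not_gt hx.2
    exact ⟨hxab, h x hxab hgx⟩
  obtain ⟨-, hq⟩ := hW.closure_subset_iff.2 hIco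
    (by rw [closure_Ico haq.ne]; exact right_mem_Icc.2 haq.le)
  rw [hgq, sub_zero] at hq
  exact hq.trans (mul_le_mul_of_nonneg_left
    (Real.rpow_le_rpow (sub_nonneg.2 haq.le) (by linarith) hα) hB)

lemma norm_le_of_eq_zero_left {a b : ℝ} (hab : a ≤ b) (hB : 0 ≤ B) (hα : 0 ≤ α)
    (hg : ContinuousOn g (Icc a b)) (hga : g a = 0)
    (h : ∀ x ∈ Icc a b, g x ≠ 0 → ‖g b - g x‖ ≤ B * (b - x) ^ α) :
    ‖g b‖ ≤ B * (b - a) ^ α := by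
  have hmaps : MapsTo (fun x => a + b - x) (Icc a b) (Icc a b) :=
    fun x hx => ⟨by linarith [hx.2], by linarith [hx.1]⟩
  have := norm_le_of_eq_zero_right (g := fun x => g (a + b - x)) hab hB hα
    (hg.comp (by fun_prop) hmaps) (by simpa using hga) fun x hx hgx => by
      have := h _ (hmaps hx) hgx
      simp only [add_sub_cancel_left]
      rwa [show b - (a + b - x) = x - a by ring] at this
  simpa using this

lemma RealHolderOn.of_ne_zero (hs : s.OrdConnected) (hg : ContinuousOn g s) (hB : 0 ≤ B)
    (hα : 0 ≤ α) (h : ∀ x ∈ s, ∀ y ∈ s, g x ≠ 0 → g y ≠ 0 → ‖g x - g y‖ ≤ B * |x - y| ^ α) :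
    RealHolderOn B α g s := by
  intro x hx y hy
  wlog hxy : x ≤ y generalizing x y
  · rw [norm_sub_rev, abs_sub_comm]
    exact this y hy x hx (le_of_not_ge hxy)
  have hsub : Icc x y ⊆ s := hs.out hx hy
  rw [abs_sub_comm, abs_of_nonneg (sub_nonneg.2 hxy)]
  by_cases hgx : g x = 0 <;> by_cases hgy : g y = 0
  · rw [hgx, hgy, sub_zero, norm_zero]
    exact mul_nonneg hB (Real.rpow_nonneg (sub_nonneg.2 hxy) _)
  · rw [hgx, zero_sub, norm_neg]
    refine norm_le_of_eq_zero_left hxy hB hα (hg.mono hsub) hgx fun z hz hgz => ?_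
    simpa [abs_of_nonneg (sub_nonneg.2 hz.2)] using h y hy z (hsub hz) hgy hgz
  · rw [hgy, sub_zero]
    refine norm_le_of_eq_zero_right hxy hB hα (hg.mono hsub) hgy fun z hz hgz => ?_
    have := h x hx z (hsub hz) hgx hgz
    rwa [abs_sub_comm, abs_of_nonneg (sub_nonneg.2 hz.1)] at this
  · have := h x hx y hy hgx hgy
    rwa [abs_sub_comm, abs_of_nonneg (sub_nonneg.2 hxy)] at this

noncomputable def holderQuotient (α T : ℝ) (g : ℝ → X) (p : Icc (0:ℝ) T × Icc (0:ℝ) T) : ℝ :=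
  if (p.1 : ℝ) = (p.2 : ℝ) then 0
  else ‖g (p.1 : ℝ) - g (p.2 : ℝ)‖ / |(p.1 : ℝ) - (p.2 : ℝ)| ^ α

lemma holderSemi_eq_iSup : holderSemi α T g = ⨆ p, holderQuotient α T g p := rfl

lemma holderQuotient_le_iff {p : Icc (0:ℝ) T × Icc (0:ℝ) T} (hB : 0 ≤ B) :
    holderQuotient α T g p ≤ B ↔ ‖g p.1 - g p.2‖ ≤ B * |(p.1 : ℝ) - p.2| ^ α := by
  unfold holderQuotient
  split_ifs with h
  · rw [h, sub_self, norm_zero, sub_self, abs_zero]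
    exact iff_of_true hB (mul_nonneg hB (Real.rpow_nonneg le_rfl α))
  · exact div_le_iff₀ (Real.rpow_pos_of_pos (abs_pos.2 (sub_ne_zero.2 h)) _)

lemma holderSemi_nonneg : 0 ≤ holderSemi α T g :=
  Real.iSup_nonneg fun p => by split_ifs <;> positivity

lemma holderSemi_le (hB : 0 ≤ B) (hg : RealHolderOn B α g (Icc 0 T)) : holderSemi α T g ≤ B :=
  Real.iSup_le (fun p => (holderQuotient_le_iff hB).2 (hg _ p.1.2 _ p.2.2)) hB

lemma RealHolderOn.bddAbove_range_holderQuotient (hg : RealHolderOn B α g (Icc 0 T)) :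
    BddAbove (range (holderQuotient α T g)) := by
  refine ⟨max B 0, ?_⟩
  rintro _ ⟨p, rfl⟩
  refine (holderQuotient_le_iff (le_max_right _ _)).2 ((hg _ p.1.2 _ p.2.2).trans ?_)
  exact mul_le_mul_of_nonneg_right (le_max_left _ _) (Real.rpow_nonneg (abs_nonneg _) _)

lemma RealHolderOn.holderSemi_of_bddAbove (hg : BddAbove (range (holderQuotient α T g))) :
    RealHolderOn (holderSemi α T g) α g (Icc 0 T) := fun x hx y hy =>
  (holderQuotient_le_iff (p := (⟨x, hx⟩, ⟨y, hy⟩)) holderSemi_nonneg).1 (le_ciSup hg _)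

/-- `holderSemi` is `0` when the supremum is infinite, so one may assume that `g` is Hölder,
hence continuous. -/
lemma holderSemi_le_of_continuousOn_imp (hα : 0 < α) (hB : 0 ≤ B)
    (h : ContinuousOn g (Icc 0 T) → RealHolderOn B α g (Icc 0 T)) : holderSemi α T g ≤ B := by
  by_cases hbdd : BddAbove (range (holderQuotient α T g))
  · exact holderSemi_le hB (h ((RealHolderOn.holderSemi_of_bddAbove hbdd).continuousOn hα))
  · rw [holderSemi_eq_iSup, Real.iSup_of_not_bddAbove hbdd]
    exact hB

lemma supNorm_nonneg : 0 ≤ supNorm T g :=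
  Real.iSup_nonneg fun _ => norm_nonneg _

lemma supNorm_le (hB : 0 ≤ B) (hg : ∀ t ∈ Icc 0 T, ‖g t‖ ≤ B) : supNorm T g ≤ B :=
  Real.iSup_le (fun t => hg t t.2) hB

end Holder

section Duhamel

variable {X : Type*} [NormedAddCommGroup X] [NormedSpace ℝ X]
  {K : ℝ → X →L[ℝ] X} {f : ℝ → X} {M k H α : ℝ}

noncomputable def duhamel (K : ℝ → X →L[ℝ] X) (f : ℝ → X) (t : ℝ) : X :=
  ∫ s in (0:ℝ)..t, K (t - s) (f s)

lemma duhamel_eq_integral_comp_sub (t : ℝ) :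
    duhamel K f t = ∫ w in (0:ℝ)..t, K w (f (t - w)) := by
  have := intervalIntegral.integral_comp_sub_left (fun w => K w (f (t - w))) t (a := 0) (b := t)
  simp only [sub_sub_cancel, sub_self, sub_zero] at this
  exact this

lemma intervalIntegrable_of_duhamel_ne_zero {t : ℝ} (h : duhamel K f t ≠ 0) :
    IntervalIntegrable (fun w => K w (f (t - w))) volume 0 t := by
  rw [duhamel_eq_integral_comp_sub] at h
  exact not_imp_comm.1 intervalIntegral.integral_undef h

variable (hM : 0 ≤ M) (hk : 0 < k) (hK : ∀ w, 0 ≤ w → ‖K w‖ ≤ M * Real.exp (-k * w))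
include hM hK

lemma norm_apply_le_of_norm_le {w c : ℝ} {x : X} (hw : 0 ≤ w) (hx : ‖x‖ ≤ c) :
    ‖K w x‖ ≤ M * c * Real.exp (-k * w) :=
  calc ‖K w x‖ ≤ ‖K w‖ * ‖x‖ := (K w).le_opNorm x
    _ ≤ M * Real.exp (-k * w) * c := mul_le_mul (hK w hw) hx (norm_nonneg _) (by positivity)
    _ = M * c * Real.exp (-k * w) := by ring

include hk

lemma norm_duhamel_le {c t : ℝ} (hc : 0 ≤ c) (ht : 0 ≤ t) (hf : ∀ s ∈ Icc 0 t, ‖f s‖ ≤ c) :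
    ‖duhamel K f t‖ ≤ M * c / k := by
  rw [duhamel_eq_integral_comp_sub]
  refine norm_integral_le_of_norm_le_mul_exp (mul_nonneg hM hc) hk le_rfl ht fun w hw => ?_
  exact norm_apply_le_of_norm_le hM hK hw.1 (hf _ ⟨by linarith [hw.2], by linarith [hw.1]⟩)

lemma norm_duhamel_sub_le {u v : ℝ} (hα : 0 ≤ α) (hH : 0 ≤ H) (hf0 : f 0 = 0)
    (hf : RealHolderOn H α f (Icc 0 v)) (hu : 0 ≤ u) (huv : u ≤ v)
    (hgu : duhamel K f u ≠ 0) (hgv : duhamel K f v ≠ 0) :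
    ‖duhamel K f v - duhamel K f u‖ ≤ 2 * M * (H * (v - u) ^ α) / k := by
  have hv : 0 ≤ v := hu.trans huv
  have hHvu : 0 ≤ H * (v - u) ^ α := mul_nonneg hH (Real.rpow_nonneg (sub_nonneg.2 huv) _)
  have hFu := intervalIntegrable_of_duhamel_ne_zero hgu
  have hFv := intervalIntegrable_of_duhamel_ne_zero hgv
  have hFv0u : IntervalIntegrable (fun w => K w (f (v - w))) volume 0 u :=
    hFv.mono_set (by rw [uIcc_of_le hu, uIcc_of_le hv]; exact Icc_subset_Icc_right huv)
  have hFvuv : IntervalIntegrable (fun w => K w (f (v - w))) volume u v :=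
    hFv.mono_set (by rw [uIcc_of_le huv, uIcc_of_le hv]; exact Icc_subset_Icc_left hu)
  have hsplit : duhamel K f v - duhamel K f u =
      (∫ w in (0:ℝ)..u, (K w (f (v - w)) - K w (f (u - w)))) + ∫ w in u..v, K w (f (v - w)) := by
    rw [duhamel_eq_integral_comp_sub, duhamel_eq_integral_comp_sub,
      intervalIntegral.integral_sub hFv0u hFu,
      ← intervalIntegral.integral_add_adjacent_intervals hFv0u hFvuv]
    abel
  have hearly : ‖∫ w in (0:ℝ)..u, (K w (f (v - w)) - K w (f (u - w)))‖ ≤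
      M * (H * (v - u) ^ α) / k := by
    refine norm_integral_le_of_norm_le_mul_exp (mul_nonneg hM hHvu) hk le_rfl hu fun w hw => ?_
    rw [← map_sub]
    refine norm_apply_le_of_norm_le hM hK hw.1 ?_
    have := hf (v - w) ⟨by linarith [hw.2], by linarith [hw.1]⟩ (u - w)
      ⟨by linarith [hw.2], by linarith [hw.1]⟩
    rwa [sub_sub_sub_cancel_right, abs_of_nonneg (sub_nonneg.2 huv)] at this
  have hlate : ‖∫ w in u..v, K w (f (v - w))‖ ≤ M * (H * (v - u) ^ α) / k := by
    refine norm_integral_le_of_norm_le_mul_exp (mul_nonneg hM hHvu) hk hu huv fun w hw => ?_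
    refine norm_apply_le_of_norm_le hM hK (hu.trans hw.1) ?_
    refine (hf.norm_le_of_apply_zero hf0 _ ⟨by linarith [hw.2], by linarith [hw.1]⟩).trans ?_
    exact mul_le_mul_of_nonneg_left
      (Real.rpow_le_rpow (by linarith [hw.2]) (by linarith [hw.1]) hα) hH
  rw [hsplit]
  calc _ ≤ _ := norm_add_le _ _
    _ ≤ _ := add_le_add hearly hlate
    _ = _ := by ring

lemma supNorm_duhamel_le {T : ℝ} (hT : 0 ≤ T) (hα : 0 ≤ α) (hH : 0 ≤ H) (hf0 : f 0 = 0)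
    (hf : RealHolderOn H α f (Icc 0 T)) :
    supNorm T (duhamel K f) ≤ M * (H * T ^ α) / k := by
  have hHT : 0 ≤ H * T ^ α := mul_nonneg hH (Real.rpow_nonneg hT _)
  refine supNorm_le (div_nonneg (mul_nonneg hM hHT) hk.le) fun t ht => ?_
  refine norm_duhamel_le hM hk hK hHT ht.1 fun s hs => ?_
  have hsT : s ∈ Icc 0 T := ⟨hs.1, hs.2.trans ht.2⟩
  exact (hf.norm_le_of_apply_zero hf0 s hsT).trans
    (mul_le_mul_of_nonneg_left (Real.rpow_le_rpow hs.1 hsT.2 hα) hH)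

lemma holderSemi_duhamel_le {T : ℝ} (hα : 0 < α) (hH : 0 ≤ H) (hf0 : f 0 = 0)
    (hf : RealHolderOn H α f (Icc 0 T)) :
    holderSemi α T (duhamel K f) ≤ 2 * M * H / k := by
  have hB : 0 ≤ 2 * M * H / k := by positivity
  refine holderSemi_le_of_continuousOn_imp hα hB fun hcont => ?_
  refine RealHolderOn.of_ne_zero ordConnected_Icc hcont hB hα.le fun x hx y hy hgx hgy => ?_
  wlog hxy : x ≤ y generalizing x y
  · rw [norm_sub_rev, abs_sub_comm]
    exact this y hy x hx hgy hgx (le_of_not_ge hxy)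
  rw [norm_sub_rev, abs_sub_comm, abs_of_nonneg (sub_nonneg.2 hxy)]
  calc _ ≤ 2 * M * (H * (y - x) ^ α) / k :=
        norm_duhamel_sub_le hM hk hK hα.le hH hf0 (hf.mono (Icc_subset_Icc_right hy.2)) hx.1 hxy
          hgx hgy
    _ = _ := by ring

end Duhamel

theorem stmt1_general {X : Type*} [NormedAddCommGroup X] [InnerProductSpace ℝ X]
    (S : ℝ → X →L[ℝ] X) (M μ : ℝ) (hM : 1 ≤ M) (hμ : 0 < μ)
    (hSbound : ∀ t : ℝ, 0 ≤ t → ‖S t‖ ≤ M * Real.exp (-μ * t))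
    (T α : ℝ) (hT : 0 < T) (hα : α ∈ Ioo (0:ℝ) 1) :
    ∃ C > 0, ∀ ε : ℝ, 0 < ε → ∀ f : ℝ → X, ContinuousOn f (Icc 0 T) → f 0 = 0 →
      (∃ K : ℝ, ∀ s ∈ Icc (0:ℝ) T, ∀ t ∈ Icc (0:ℝ) T, ‖f t - f s‖ ≤ K * |t - s| ^ α) →
      holderNorm α T (fun t => ∫ s in (0:ℝ)..t, S ((t - s) / ε ^ 2) (f s)) ≤
        C * ε ^ 2 * holderNorm α T f := by
  have hM0 : 0 < M := one_pos.trans_le hM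
  refine ⟨M / μ * (T ^ α + 2), by positivity, fun ε hε f _ hf0 ⟨K, hK⟩ => ?_⟩
  have hk : 0 < μ / ε ^ 2 := by positivity
  have hkernel : ∀ w, 0 ≤ w → ‖S (w / ε ^ 2)‖ ≤ M * Real.exp (-(μ / ε ^ 2) * w) := fun w hw => by
    rw [show -(μ / ε ^ 2) * w = -μ * (w / ε ^ 2) by ring]
    exact hSbound _ (by positivity)
  have hfH : RealHolderOn (holderSemi α T f) α f (Icc 0 T) :=
    .holderSemi_of_bddAbove
      (RealHolderOn.bddAbove_range_holderQuotient fun x hx y hy => hK y hy x hx)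
  have hsup := supNorm_duhamel_le hM0.le hk hkernel hT.le hα.1.le holderSemi_nonneg hf0 hfH
  have hsemi := holderSemi_duhamel_le hM0.le hk hkernel hα.1 holderSemi_nonneg hf0 hfH
  calc supNorm T (duhamel _ f) + holderSemi α T (duhamel _ f)
      ≤ M * (holderSemi α T f * T ^ α) / (μ / ε ^ 2) + 2 * M * holderSemi α T f / (μ / ε ^ 2) :=
        add_le_add hsup hsemi
    _ = M / μ * (T ^ α + 2) * ε ^ 2 * holderSemi α T f := by field_simp
    _ ≤ M / μ * (T ^ α + 2) * ε ^ 2 * holderNorm α T f :=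
        mul_le_mul_of_nonneg_left (le_add_of_nonneg_left supNorm_nonneg) (by positivity)

/-- If `L` generates an analytic semigroup `S t = e^{tL}` on a Hilbert space
with `‖S t‖ ≤ M e^{-μ t}` (`M ≥ 1`, `μ > 0`), then for `α ∈ (0,1)` there is a constant `C`
such that for all `ε > 0` and `f ∈ C^α([0,T];X)` with `f 0 = 0`,
`‖t ↦ ∫₀ᵗ e^{(t-s)L/ε²} f(s) ds‖_{C^α([0,T];X)} ≤ C ε² ‖f‖_{C^α([0,T];X)}`. -/
theorem stmt1 {X : Type*} [NormedAddCommGroup X] [InnerProductSpace ℝ X] [CompleteSpace X]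
    (S : ℝ → X →L[ℝ] X) (M μ : ℝ) (hM : 1 ≤ M) (hμ : 0 < μ)
    (hS0 : S 0 = ContinuousLinearMap.id ℝ X)
    (hSadd : ∀ s t : ℝ, 0 ≤ s → 0 ≤ t → S (s + t) = (S s).comp (S t))
    (hSbound : ∀ t : ℝ, 0 ≤ t → ‖S t‖ ≤ M * Real.exp (-μ * t))
    (T α : ℝ) (hT : 0 < T) (hα : α ∈ Ioo (0:ℝ) 1) :
    ∃ C > 0, ∀ ε : ℝ, 0 < ε → ∀ f : ℝ → X, ContinuousOn f (Icc 0 T) → f 0 = 0 →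
      (∃ K : ℝ, ∀ s ∈ Icc (0:ℝ) T, ∀ t ∈ Icc (0:ℝ) T, ‖f t - f s‖ ≤ K * |t - s| ^ α) →
      holderNorm α T (fun t => ∫ s in (0:ℝ)..t, S ((t - s) / ε ^ 2) (f s)) ≤
        C * ε ^ 2 * holderNorm α T f :=
  stmt1_general S M μ hM hμ hSbound T α hT hα
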